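/- Let A be a finite set, θ : A → ℝ, π the softmax of θ, a₀ ∈ A, θ'(a₀) = θ(a₀) - log(1/π(a₀)), θ'(a) = θ(a) for a ≠ a₀, and π' the softmax of θ'. Then π'(a₀) - π(a₀) = -π(a₀)·(1 - π(a₀))² / (π(a₀)² - π(a₀) + 1). -/

import Mathlib

/-!
Lowering the logit of `a₀` by `log (1 / p)`, where `p = π a₀`, multiplies its weight `exp (θ a₀)`
by `p` and leaves the other weights alone. Since `exp (θ a₀) = p S` for the normaliser `S`, the new
normaliser is `S (1 - p + p ^ 2)`, so `π' a₀ = p ^ 2 / (p ^ 2 - p + 1)`, and subtracting `p` gives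
the claimed formula.
-/

section SoftmaxShift

open Finset Real

variable {A : Type*} [Fintype A] {θ θ' : A → ℝ} {a₀ : A} {c : ℝ}

lemma sum_exp_pos [Nonempty A] (θ : A → ℝ) : 0 < ∑ a, exp (θ a) :=
  sum_pos (fun _ _ ↦ exp_pos _) univ_nonempty

lemma sum_exp_of_shift_single (h₀ : θ' a₀ = θ a₀ + c) (hne : ∀ a ≠ a₀, θ' a = θ a) :
    ∑ a, exp (θ' a) = ∑ a, exp (θ a) + (exp c - 1) * exp (θ a₀) := by
  classical
  rw [← add_sum_erase _ _ (mem_univ a₀), ← add_sum_erase _ (fun a ↦ exp (θ a)) (mem_univ a₀),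
    sum_congr rfl fun a ha ↦ by rw [hne a (ne_of_mem_erase ha)], h₀, exp_add]
  ring

lemma softmax_of_shift_single (h₀ : θ' a₀ = θ a₀ + c) (hne : ∀ a ≠ a₀, θ' a = θ a) :
    exp (θ' a₀) / ∑ a, exp (θ' a) =
      let p := exp (θ a₀) / ∑ a, exp (θ a)
      p * exp c / (1 - p + p * exp c) := by
  have := Nonempty.intro a₀
  have hS := sum_exp_pos θ
  rw [sum_exp_of_shift_single h₀ hne, h₀, exp_add]
  field_simp
  ring

end SoftmaxShift

lemma sq_div_sq_sub_add_one_sub_self (p : ℝ) :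
    p ^ 2 / (p ^ 2 - p + 1) - p = -(p * (1 - p) ^ 2) / (p ^ 2 - p + 1) := by
  have hden : p ^ 2 - p + 1 ≠ 0 := by nlinarith [sq_nonneg (p - 1 / 2)]
  rw [eq_div_iff hden, sub_mul, div_mul_cancel₀ _ hden]
  ring

theorem stmt_7 {A : Type*} [Fintype A] (θ θ' π π' : A → ℝ) (a₀ : A)
    (hπ : ∀ a, π a = Real.exp (θ a) / ∑ a', Real.exp (θ a'))
    (hθ'0 : θ' a₀ = θ a₀ - Real.log (1 / π a₀))
    (hθ' : ∀ a ≠ a₀, θ' a = θ a)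
    (hπ' : ∀ a, π' a = Real.exp (θ' a) / ∑ a', Real.exp (θ' a')) :
    π' a₀ - π a₀ = -(π a₀ * (1 - π a₀) ^ 2) / ((π a₀) ^ 2 - π a₀ + 1) := by
  have := Nonempty.intro a₀
  have hpos : 0 < π a₀ := by
    rw [hπ]
    exact div_pos (Real.exp_pos _) (sum_exp_pos θ)
  have hshift : θ' a₀ = θ a₀ + Real.log (π a₀) := by
    rw [hθ'0, one_div, Real.log_inv, sub_neg_eq_add]
  have hnew : π' a₀ = π a₀ ^ 2 / (π a₀ ^ 2 - π a₀ + 1) := by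
    rw [hπ', softmax_of_shift_single hshift hθ', ← hπ, Real.exp_log hpos]
    ring
  rw [hnew, sq_div_sq_sub_add_one_sub_self]
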